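/- arXiv:2410.03890 — 3 statements merged into one kernel-verified Lean document; each statement's English description precedes it below -/
import Mathlib

section
/- Let ψ⁰ : ℝ → ℝ be twice differentiable, and define ψ¹(t) = (ψ⁰)'(t) + α₀·ψ⁰(t) for a constant α₀ > 0. If ψ⁰(0) ≥ 0, ψ¹(0) ≥ 0, and (ψ¹)'(t) + α₁·ψ¹(t) ≥ 0 for all t ≥ 0 with constant α₁ > 0, then ψ⁰(t) ≥ 0 and ψ¹(t) ≥ 0 for all t ≥ 0. -/
open Real

/-
Both ψ¹ and ψ⁰ satisfy a scalar differential inequality f' + α f ≥ 0 with f(0) ≥ 0: for ψ¹ this is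
the hypothesis, for ψ⁰ it is ψ¹ ≥ 0. Such an f stays nonnegative, because the integrating factor
makes t ↦ f(t) e^{α t} monotone, its derivative being (f' + α f) e^{α t} ≥ 0.
-/

theorem hasDerivAt_mul_exp_const_mul {f : ℝ → ℝ} {t : ℝ} (α : ℝ) (hf : DifferentiableAt ℝ f t) :
    HasDerivAt (fun s => f s * exp (α * s)) ((deriv f t + α * f t) * exp (α * t)) t := by
  have hexp : HasDerivAt (fun s => exp (α * s)) (exp (α * t) * α) t :=
    ((hasDerivAt_id t).const_mul α).exp.congr_deriv (by simp)
  exact (hf.hasDerivAt.mul hexp).congr_deriv (by ring)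

theorem nonneg_of_deriv_add_const_mul_nonneg {f : ℝ → ℝ} {α a : ℝ} (hf : Differentiable ℝ f)
    (ha : 0 ≤ f a) (h : ∀ t ≥ a, 0 ≤ deriv f t + α * f t) : ∀ t ≥ a, 0 ≤ f t := by
  intro t ht
  have hmono : MonotoneOn (fun s => f s * exp (α * s)) (Set.Ici a) := by
    refine monotoneOn_of_hasDerivWithinAt_nonneg (convex_Ici a) ?_
      (fun s _ => (hasDerivAt_mul_exp_const_mul α (hf s)).hasDerivWithinAt) ?_
    · exact (hf.continuous.mul (continuous_const.mul continuous_id).rexp).continuousOn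
    · intro s hs
      rw [interior_Ici] at hs
      exact mul_nonneg (h s (le_of_lt hs)) (exp_pos _).le
  have hweighted : 0 ≤ f t * exp (α * t) :=
    (mul_nonneg ha (exp_pos _).le).trans (hmono Set.self_mem_Ici ht ht)
  exact nonneg_of_mul_nonneg_left hweighted (exp_pos _)

theorem hocbf_second_order_invariance_general (ψ0 : ℝ → ℝ) (α0 α1 : ℝ)
    (hd : Differentiable ℝ ψ0) (hd2 : Differentiable ℝ (deriv ψ0))
    (ψ1 : ℝ → ℝ) (hψ1 : ψ1 = fun t => deriv ψ0 t + α0 * ψ0 t)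
    (h0 : 0 ≤ ψ0 0) (h1 : 0 ≤ ψ1 0)
    (hineq : ∀ t ≥ (0 : ℝ), deriv ψ1 t + α1 * ψ1 t ≥ 0) :
    ∀ t ≥ (0 : ℝ), 0 ≤ ψ0 t ∧ 0 ≤ ψ1 t := by
  have hψ1_diff : Differentiable ℝ ψ1 := hψ1 ▸ hd2.add (hd.const_mul α0)
  have hψ1_nonneg : ∀ t ≥ (0 : ℝ), 0 ≤ ψ1 t :=
    nonneg_of_deriv_add_const_mul_nonneg hψ1_diff h1 hineq
  have hψ0_nonneg : ∀ t ≥ (0 : ℝ), 0 ≤ ψ0 t :=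
    nonneg_of_deriv_add_const_mul_nonneg hd h0 fun t ht => by
      simpa only [hψ1] using hψ1_nonneg t ht
  exact fun t ht => ⟨hψ0_nonneg t ht, hψ1_nonneg t ht⟩

/-- Second-order HOCBF forward invariance with linear class-K functions. -/
theorem hocbf_second_order_invariance (ψ0 : ℝ → ℝ) (α0 α1 : ℝ)
    (hα0 : 0 < α0) (hα1 : 0 < α1)
    (hd : Differentiable ℝ ψ0) (hd2 : Differentiable ℝ (deriv ψ0))
    (ψ1 : ℝ → ℝ) (hψ1 : ψ1 = fun t => deriv ψ0 t + α0 * ψ0 t)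
    (h0 : 0 ≤ ψ0 0) (h1 : 0 ≤ ψ1 0)
    (hineq : ∀ t ≥ (0 : ℝ), deriv ψ1 t + α1 * ψ1 t ≥ 0) :
    ∀ t ≥ (0 : ℝ), 0 ≤ ψ0 t ∧ 0 ≤ ψ1 t :=
  hocbf_second_order_invariance_general ψ0 α0 α1 hd hd2 ψ1 hψ1 h0 h1 hineq
end

section
/- Suppose p : ℝ → ℝ² is twice differentiable, p_ref : ℝ → ℝ² is twice differentiable, h(t) = (1/2)(w² − ‖p(t) − p_ref(t)‖²) with w > 0, and define ψ¹ = h' + α₀h with α₀ > 0. If h(0) ≥ 0, ψ¹(0) ≥ 0, and (ψ¹)' + α₁ψ¹ ≥ 0 on [0, ∞) for some α₁ > 0, then ‖p(t) − p_ref(t)‖ ≤ w for all t ≥ 0. -/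
open Real Set

/- The barrier `h` and the auxiliary barrier `ψ1` each satisfy a linear differential inequality
`f' + α f ≥ 0`, i.e. `exp (α t) * f t` is nondecreasing, so nonnegativity at `t = 0` propagates
forward: first for `ψ1`, then, since `ψ1 = h' + α0 h`, for `h`; and `h ≥ 0` is `‖p - pref‖ ≤ w`. -/

theorem nonneg_of_deriv_add_mul_nonneg {f : ℝ → ℝ} {a α : ℝ} (hcont : ContinuousOn f (Ici a))
    (hdiff : DifferentiableOn ℝ f (Ioi a)) (hineq : ∀ t > a, 0 ≤ deriv f t + α * f t)
    (ha : 0 ≤ f a) {t : ℝ} (ht : a ≤ t) : 0 ≤ f t := by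
  set g : ℝ → ℝ := fun s => exp (α * s) * f s
  have hg_deriv : ∀ s > a, HasDerivAt g (exp (α * s) * (deriv f s + α * f s)) s := by
    intro s hs
    have hf := (hdiff.differentiableAt (Ioi_mem_nhds hs)).hasDerivAt
    exact (((hasDerivAt_id s).const_mul α).exp.mul hf).congr_deriv (by simp only [id]; ring)
  have hg_mono : MonotoneOn g (Ici a) := by
    refine monotoneOn_of_deriv_nonneg (convex_Ici a) ?_ ?_ ?_
    · exact (continuous_exp.comp (continuous_const_mul α)).continuousOn.mul hcont
    · rw [interior_Ici]
      exact fun s hs => (hg_deriv s hs).differentiableAt.differentiableWithinAt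
    · rw [interior_Ici]
      intro s hs
      rw [(hg_deriv s hs).deriv]
      exact mul_nonneg (exp_pos _).le (hineq s hs)
  have hg_nonneg : 0 ≤ g t :=
    (mul_nonneg (exp_pos _).le ha).trans (hg_mono self_mem_Ici ht ht)
  exact nonneg_of_mul_nonneg_right hg_nonneg (exp_pos _)

theorem hasDerivAt_half_mul_sq_sub_norm_sq {E : Type*} [NormedAddCommGroup E]
    [InnerProductSpace ℝ E] {q : ℝ → E} {q' : E} {t : ℝ} (w : ℝ) (hq : HasDerivAt q q' t) :
    HasDerivAt (fun s => 1 / 2 * (w ^ 2 - ‖q s‖ ^ 2)) (-inner ℝ (q t) q') t :=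
  (((hasDerivAt_const t (w ^ 2)).sub hq.norm_sq).const_mul (1 / 2 : ℝ)).congr_deriv
    (by ring)

theorem safe_reference_tracking_general (p pref : ℝ → EuclideanSpace ℝ (Fin 2))
    (w α0 α1 : ℝ) (hw : 0 < w)
    (hp : Differentiable ℝ p) (hp2 : Differentiable ℝ (deriv p))
    (hr : Differentiable ℝ pref) (hr2 : Differentiable ℝ (deriv pref))
    (h : ℝ → ℝ) (hh : h = fun t => (1 / 2 : ℝ) * (w ^ 2 - ‖p t - pref t‖ ^ 2))
    (ψ1 : ℝ → ℝ) (hψ1 : ψ1 = fun t => deriv h t + α0 * h t)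
    (h0 : 0 ≤ h 0) (h1 : 0 ≤ ψ1 0)
    (hineq : ∀ t ≥ (0 : ℝ), deriv ψ1 t + α1 * ψ1 t ≥ 0) :
    ∀ t ≥ (0 : ℝ), ‖p t - pref t‖ ≤ w := by
  have hh_deriv : ∀ s, HasDerivAt h (-inner ℝ (p s - pref s) (deriv p s - deriv pref s)) s := by
    subst hh
    exact fun s => hasDerivAt_half_mul_sq_sub_norm_sq w ((hp s).hasDerivAt.sub (hr s).hasDerivAt)
  have hh_diff : Differentiable ℝ h := fun s => (hh_deriv s).differentiableAt
  have hψ1_diff : Differentiable ℝ ψ1 := by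
    rw [hψ1, funext fun s => (hh_deriv s).deriv]
    exact ((hp.sub hr).inner ℝ (hp2.sub hr2)).neg.add (hh_diff.const_mul α0)
  have hψ1_nonneg : ∀ t ≥ (0 : ℝ), 0 ≤ ψ1 t := fun t =>
    nonneg_of_deriv_add_mul_nonneg hψ1_diff.continuous.continuousOn hψ1_diff.differentiableOn
      (fun s hs => hineq s hs.le) h1
  have hh_nonneg : ∀ t ≥ (0 : ℝ), 0 ≤ h t := fun t =>
    nonneg_of_deriv_add_mul_nonneg hh_diff.continuous.continuousOn hh_diff.differentiableOn
      (fun s hs => by simpa only [hψ1] using hψ1_nonneg s hs.le) h0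
  intro t ht
  have hsq : ‖p t - pref t‖ ^ 2 ≤ w ^ 2 := by
    have := hh_nonneg t ht
    rw [hh] at this
    linarith
  exact (sq_le_sq₀ (norm_nonneg _) hw.le).1 hsq

/-- Safe reference tracking via a second-order HOCBF: the vehicle stays within
distance `w` of the reference trajectory for all `t ≥ 0`. -/
theorem safe_reference_tracking (p pref : ℝ → EuclideanSpace ℝ (Fin 2))
    (w α0 α1 : ℝ) (hw : 0 < w) (hα0 : 0 < α0) (hα1 : 0 < α1)
    (hp : Differentiable ℝ p) (hp2 : Differentiable ℝ (deriv p))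
    (hr : Differentiable ℝ pref) (hr2 : Differentiable ℝ (deriv pref))
    (h : ℝ → ℝ) (hh : h = fun t => (1 / 2 : ℝ) * (w ^ 2 - ‖p t - pref t‖ ^ 2))
    (ψ1 : ℝ → ℝ) (hψ1 : ψ1 = fun t => deriv h t + α0 * h t)
    (h0 : 0 ≤ h 0) (h1 : 0 ≤ ψ1 0)
    (hineq : ∀ t ≥ (0 : ℝ), deriv ψ1 t + α1 * ψ1 t ≥ 0) :
    ∀ t ≥ (0 : ℝ), ‖p t - pref t‖ ≤ w :=
  safe_reference_tracking_general p pref w α0 α1 hw hp hp2 hr hr2 h hh ψ1 hψ1 h0 h1 hineq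
end

section
/- Suppose p : ℝ → ℝ² is twice differentiable, p_o ∈ ℝ² fixed, h(t) = (1/2)(‖p_o − p(t)‖² − Δ²) with Δ > 0, and ψ¹ = h' + α₀h with α₀ > 0. If h(0) ≥ 0, ψ¹(0) ≥ 0, and (ψ¹)' + α₁ψ¹ ≥ 0 on [0, ∞) for some α₁ > 0, then ‖p(t) − p_o‖ ≥ Δ for all t ≥ 0, i.e., the vehicle never collides with the obstacle's safety region. -/
/-!
Both `h` and `ψ¹` satisfy a differential inequality `f' + α f ≥ 0` on `[0, ∞)` with `f(0) ≥ 0`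
(for `h` this is `ψ¹ ≥ 0`). Multiplying by the integrating factor `exp (α t)` makes `f` a
function with nonnegative derivative, so `f` stays nonnegative. Applied first to `ψ¹` and then
to `h`, this gives `‖p_o − p(t)‖² ≥ Δ²` for all `t ≥ 0`.
-/

open Real

theorem nonneg_of_deriv_add_mul_nonneg_s10 {f : ℝ → ℝ} {α a : ℝ} (hf : Differentiable ℝ f)
    (ha : 0 ≤ f a) (hf' : ∀ t ≥ a, 0 ≤ deriv f t + α * f t) : ∀ t ≥ a, 0 ≤ f t := by
  set g : ℝ → ℝ := fun t => exp (α * t) * f t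
  have hg : ∀ t, HasDerivAt g (exp (α * t) * (deriv f t + α * f t)) t := by
    intro t
    have hexp : HasDerivAt (fun t => exp (α * t)) (exp (α * t) * α) t := by
      simpa using ((hasDerivAt_id t).const_mul α).exp
    exact (hexp.mul (hf t).hasDerivAt).congr_deriv (by ring)
  have hg_diff : Differentiable ℝ g := fun t => (hg t).differentiableAt
  have hg_mono : MonotoneOn g (Set.Ici a) := by
    refine monotoneOn_of_deriv_nonneg (convex_Ici a) hg_diff.continuous.continuousOn
      hg_diff.differentiableOn fun t ht => ?_
    rw [interior_Ici] at ht
    rw [(hg t).deriv]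
    exact mul_nonneg (exp_pos _).le (hf' t ht.le)
  intro t ht
  have hgt : 0 ≤ g t :=
    (mul_nonneg (exp_pos _).le ha).trans (hg_mono Set.self_mem_Ici ht ht)
  exact nonneg_of_mul_nonneg_right hgt (exp_pos _)

theorem hasDerivAt_half_norm_sub_sq_sub {E : Type*} [NormedAddCommGroup E]
    [InnerProductSpace ℝ E] {p : ℝ → E} {p' : E} {t : ℝ} (c : E) (r : ℝ)
    (hp : HasDerivAt p p' t) :
    HasDerivAt (fun s => 1 / 2 * (‖c - p s‖ ^ 2 - r ^ 2)) (-inner ℝ (c - p t) p') t := by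
  refine (((hp.const_sub c).norm_sq.sub_const (r ^ 2)).const_mul (1 / 2 : ℝ)).congr_deriv ?_
  rw [inner_neg_right]
  ring

theorem obstacle_avoidance_general (p : ℝ → EuclideanSpace ℝ (Fin 2))
    (po : EuclideanSpace ℝ (Fin 2)) (Δ α0 α1 : ℝ)
    (hp : Differentiable ℝ p) (hp2 : Differentiable ℝ (deriv p))
    (h : ℝ → ℝ) (hh : h = fun t => (1 / 2 : ℝ) * (‖po - p t‖ ^ 2 - Δ ^ 2))
    (ψ1 : ℝ → ℝ) (hψ1 : ψ1 = fun t => deriv h t + α0 * h t)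
    (h0 : 0 ≤ h 0) (h1 : 0 ≤ ψ1 0)
    (hineq : ∀ t ≥ (0 : ℝ), deriv ψ1 t + α1 * ψ1 t ≥ 0) :
    ∀ t ≥ (0 : ℝ), Δ ≤ ‖p t - po‖ := by
  have hh' : ∀ t, HasDerivAt h (-inner ℝ (po - p t) (deriv p t)) t := fun t =>
    hh ▸ hasDerivAt_half_norm_sub_sq_sub po Δ (hp t).hasDerivAt
  have hh_diff : Differentiable ℝ h := fun t => (hh' t).differentiableAt
  have hψ1_diff : Differentiable ℝ ψ1 := by
    rw [hψ1, funext fun t => (hh' t).deriv]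
    exact ((hp.const_sub po).inner ℝ hp2).neg.add (hh_diff.const_mul α0)
  have hψ1_nonneg := nonneg_of_deriv_add_mul_nonneg_s10 hψ1_diff h1 hineq
  have hh_nonneg := nonneg_of_deriv_add_mul_nonneg_s10 hh_diff h0 (hψ1 ▸ hψ1_nonneg)
  intro t ht
  have hsq : Δ ^ 2 ≤ ‖p t - po‖ ^ 2 := by
    have := hh_nonneg t ht
    simp only [hh, norm_sub_rev po] at this
    linarith
  exact (le_abs_self Δ).trans (abs_le_of_sq_le_sq hsq (norm_nonneg _))

/-- Obstacle avoidance via a second-order HOCBF: the vehicle never enters the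
obstacle's safety region of radius `Δ`. -/
theorem obstacle_avoidance (p : ℝ → EuclideanSpace ℝ (Fin 2))
    (po : EuclideanSpace ℝ (Fin 2)) (Δ α0 α1 : ℝ)
    (hΔ : 0 < Δ) (hα0 : 0 < α0) (hα1 : 0 < α1)
    (hp : Differentiable ℝ p) (hp2 : Differentiable ℝ (deriv p))
    (h : ℝ → ℝ) (hh : h = fun t => (1 / 2 : ℝ) * (‖po - p t‖ ^ 2 - Δ ^ 2))
    (ψ1 : ℝ → ℝ) (hψ1 : ψ1 = fun t => deriv h t + α0 * h t)
    (h0 : 0 ≤ h 0) (h1 : 0 ≤ ψ1 0)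
    (hineq : ∀ t ≥ (0 : ℝ), deriv ψ1 t + α1 * ψ1 t ≥ 0) :
    ∀ t ≥ (0 : ℝ), Δ ≤ ‖p t - po‖ :=
  obstacle_avoidance_general p po Δ α0 α1 hp hp2 h hh ψ1 hψ1 h0 h1 hineq
end
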